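/- Jump relation for the double layer potential: For every φ ∈ H^{1/2}₀(ℝⁿ), Tr₀(D^{L,+}φ) + Tr₀(D^{L,−}φ) = −φ in H^{1/2}₀(ℝⁿ), and moreover ∂_ν^{L,+}(D^{L,+}φ) = ∂_ν^{L,−}(D^{L,−}φ) in H^{−1/2}(ℝⁿ). -/
import Mathlib


open scoped ComplexConjugate

noncomputable section

/-- Jump relations for the double layer potential.  Abstract setting:
`Y = Y^{1,2}(ℝⁿ⁺¹)` with linear trace `Tr = Tr₀ : Y → H = H^{1/2}₀(ℝⁿ)`, and the global
form of `L` splits as `B = Bp + Bm` into upper/lower half-space forms; elements of `Y` are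
determined by testing the form (`huniq`, from coercivity).  Given `φ ∈ H` with extension
`Φ` (`Tr Φ = φ`), the double layer potentials are `D^{L,+}φ = (−Φ + wp)|₊` and
`D^{L,−}φ = (−Φ + wm)|₋`, where `wp = L⁻¹(F⁺_Φ)` and `wm = L⁻¹(F⁻_Φ)` are characterized by
`B[wp,v] = Bp[Φ,v]` and `B[wm,v] = Bm[Φ,v]` for all `v`.  Then
`Tr₀(D^{L,+}φ) + Tr₀(D^{L,−}φ) = −φ` in `H^{1/2}₀(ℝⁿ)`, and the conormal derivatives agree:
`∂_ν^{L,+}(D^{L,+}φ) = ∂_ν^{L,−}(D^{L,−}φ)` in `H^{−1/2}(ℝⁿ)`, i.e.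
`Bp[−Φ + wp, Ψ] = Bm[−Φ + wm, Ψ]` for every test `Ψ`. -/
theorem stmt17 {Y H : Type*}
    [NormedAddCommGroup Y] [NormedSpace ℂ Y]
    [AddCommGroup H] [Module ℂ H]
    (B Bp Bm : Y → Y → ℂ)
    (hsplit : ∀ a v : Y, B a v = Bp a v + Bm a v)
    (hBadd : ∀ a b v : Y, B (a + b) v = B a v + B b v)
    (hBpadd : ∀ a b v : Y, Bp (a + b) v = Bp a v + Bp b v)
    (hBmadd : ∀ a b v : Y, Bm (a + b) v = Bm a v + Bm b v)
    (huniq : ∀ y z : Y, (∀ v : Y, B y v = B z v) → y = z)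
    (Tr : Y →ₗ[ℂ] H)
    (φ : H) (Φ : Y) (hΦ : Tr Φ = φ)
    (wp wm : Y)
    (hwp : ∀ v : Y, B wp v = Bp Φ v)
    (hwm : ∀ v : Y, B wm v = Bm Φ v) :
    (Tr (-Φ + wp) + Tr (-Φ + wm) = -φ) ∧
    (∀ Ψ : Y, Bp wp Ψ - Bp Φ Ψ = Bm wm Ψ - Bm Φ Ψ) := by
  have hsum : wp + wm = Φ := by
    apply huniq
    intro v
    rw [hBadd, hwp, hwm, hsplit]
  constructor
  · rw [← hΦ, ← map_add]
    have : -Φ + wp + (-Φ + wm) = -Φ := by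
      rw [← hsum]; abel
    rw [this, map_neg]
  · intro Ψ
    have h1 : Bp wp Ψ + Bp wm Ψ = Bp Φ Ψ := by rw [← hBpadd, hsum]
    have h2 : Bm wp Ψ + Bm wm Ψ = Bm Φ Ψ := by rw [← hBmadd, hsum]
    have h3 : Bp wp Ψ + Bm wp Ψ = Bp Φ Ψ := by rw [← hsplit, hwp]
    linear_combination h3 - h2
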